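/- arXiv:1710.07940 — 2 statements merged into one kernel-verified Lean document; each statement's English description precedes it below -/
import Mathlib

section
/- Let γ be a 2n×2n real symplectic matrix, λ an eigenvalue with |λ| = 1, and ξ_{i,j} Jordan chains as above (γξ_{i,j} = λξ_{i,j} - ξ_{i,j-1}, ξ_{i,0}=0). Then whenever j + j' ≤ max(j_i, j_{i'}), one has (ξ_{i,j}, ξ_{i',j'})_G = 0. -/
open Matrix Complex

noncomputable def JmatR (n : ℕ) : Matrix (Fin n ⊕ Fin n) (Fin n ⊕ Fin n) ℝ :=
  Matrix.fromBlocks 0 1 (-1) 0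

noncomputable def Jmat (n : ℕ) : Matrix (Fin n ⊕ Fin n) (Fin n ⊕ Fin n) ℂ :=
  Matrix.fromBlocks 0 1 (-1) 0

/-- The Krein form `(x,y)_G = i ⟨x, J y⟩`. -/
noncomputable def krein (n : ℕ) (x y : (Fin n ⊕ Fin n) → ℂ) : ℂ :=
  Complex.I * ∑ j, x j * (starRingEnd ℂ) ((Jmat n).mulVec y j)

/-!
Invariance of a sesquilinear form `B` under `g`, applied to the successors `ξ (a + 1)`,
`η (b + 1)` of two Jordan chain vectors, together with `λ λ̄ = 1`, expresses `B (ξ a) (η (b + 1))`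
through pairs with smaller second index; induction on that index from `η 0 = 0` kills
`B (ξ a) (η b)` whenever `a + b ≤ p`. The Krein form of a real symplectic matrix is such a form
and is Hermitian, so the same bound holds with the roles of the two chains exchanged.
-/

section JordanChain

variable {R M : Type*} [CommRing R] [StarRing R] [AddCommGroup M] [Module R M]

structure IsJordanChain (g : M → M) (lam : R) (ξ : ℕ → M) (p : ℕ) : Prop where
  zero : ξ 0 = 0
  apply_succ : ∀ j < p, g (ξ (j + 1)) = lam • ξ (j + 1) - ξ j

variable {B : M →ₗ[R] M →ₗ⋆[R] R} {g : M → M} {lam : R} {ξ η : ℕ → M} {p q : ℕ}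

theorem IsJordanChain.form_succ_right (hB : ∀ x y, B (g x) (g y) = B x y)
    (hlam : lam ∈ unitary R) (hξ : IsJordanChain g lam ξ p) (hη : IsJordanChain g lam η q)
    {a b : ℕ} (ha : a < p) (hb : b < q) :
    B (ξ a) (η (b + 1)) = lam * B (ξ a) (η b) - lam ^ 2 * B (ξ (a + 1)) (η b) := by
  have h := hB (ξ (a + 1)) (η (b + 1))
  rw [hξ.apply_succ a ha, hη.apply_succ b hb] at h
  simp only [map_sub, map_smul, map_smulₛₗ, LinearMap.sub_apply, LinearMap.smul_apply,
    smul_eq_mul, starRingEnd_apply] at h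
  linear_combination -lam * h +
    (lam * B (ξ (a + 1)) (η (b + 1)) - B (ξ a) (η (b + 1))) * Unitary.mul_star_self_of_mem hlam

theorem IsJordanChain.form_eq_zero_of_add_le (hB : ∀ x y, B (g x) (g y) = B x y)
    (hlam : lam ∈ unitary R) (hξ : IsJordanChain g lam ξ p) (hη : IsJordanChain g lam η q)
    {a b : ℕ} (hb : b ≤ q) (hab : a + b ≤ p) : B (ξ a) (η b) = 0 := by
  induction b generalizing a with
  | zero => rw [hη.zero, map_zero]
  | succ b ih =>
    rw [hξ.form_succ_right hB hlam hη (by omega) (by omega), ih (by omega) (by omega),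
      ih (by omega) (by omega)]
    ring

end JordanChain

section RealMatrix

variable {ι : Type*} [Fintype ι]

lemma map_ofReal_mul (A B : Matrix ι ι ℝ) : (A * B).map ofReal = A.map ofReal * B.map ofReal :=
  Matrix.map_mul (f := ofRealHom)

lemma star_map_ofReal_mulVec (A : Matrix ι ι ℝ) (v : ι → ℂ) :
    star (A.map ofReal *ᵥ v) = A.map ofReal *ᵥ star v := by
  ext k
  simp [mulVec, dotProduct, star_sum, mul_comm]

lemma dotProduct_star_map_ofReal_mulVec_mulVec {S γ : Matrix ι ι ℝ} (h : γᵀ * S * γ = S)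
    (x y : ι → ℂ) :
    (γ.map ofReal *ᵥ x) ⬝ᵥ star (S.map ofReal *ᵥ γ.map ofReal *ᵥ y)
      = x ⬝ᵥ star (S.map ofReal *ᵥ y) := by
  simp only [star_map_ofReal_mulVec]
  rw [dotProduct_comm, dotProduct_mulVec, ← mulVec_transpose, dotProduct_comm, mulVec_mulVec,
    mulVec_mulVec, ← transpose_map, ← map_ofReal_mul, ← map_ofReal_mul, h]

lemma star_dotProduct_star_map_ofReal_mulVec {S : Matrix ι ι ℝ} (h : Sᵀ = -S) (x y : ι → ℂ) :
    star (x ⬝ᵥ star (S.map ofReal *ᵥ y)) = -(y ⬝ᵥ star (S.map ofReal *ᵥ x)) := by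
  rw [dotProduct_star, star_star, dotProduct_comm, dotProduct_mulVec, ← mulVec_transpose,
    dotProduct_comm, ← transpose_map, h, Matrix.map_neg _ ofReal_neg, neg_mulVec, dotProduct_neg,
    star_map_ofReal_mulVec]

end RealMatrix

lemma JmatR_transpose (n : ℕ) : (JmatR n)ᵀ = -JmatR n := by
  simp [JmatR, fromBlocks_transpose, fromBlocks_neg]

lemma Jmat_eq_map (n : ℕ) : Jmat n = (JmatR n).map ofReal := by
  simp [Jmat, JmatR, fromBlocks_map, Matrix.map_neg]

lemma krein_eq (n : ℕ) (x y : Fin n ⊕ Fin n → ℂ) :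
    krein n x y = I * (x ⬝ᵥ star ((JmatR n).map ofReal *ᵥ y)) := by
  rw [← Jmat_eq_map]
  rfl

lemma conj_krein (n : ℕ) (x y : Fin n ⊕ Fin n → ℂ) :
    starRingEnd ℂ (krein n x y) = krein n y x := by
  rw [krein_eq, krein_eq, map_mul, conj_I, ← star_def,
    star_dotProduct_star_map_ofReal_mulVec (JmatR_transpose n)]
  ring

lemma krein_map_ofReal_mulVec {n : ℕ} {γ : Matrix (Fin n ⊕ Fin n) (Fin n ⊕ Fin n) ℝ}
    (hγ : γᵀ * JmatR n * γ = JmatR n) (x y : Fin n ⊕ Fin n → ℂ) :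
    krein n (γ.map ofReal *ᵥ x) (γ.map ofReal *ᵥ y) = krein n x y := by
  rw [krein_eq, krein_eq, dotProduct_star_map_ofReal_mulVec_mulVec hγ]

noncomputable def kreinForm (n : ℕ) : (Fin n ⊕ Fin n → ℂ) →ₗ[ℂ] (Fin n ⊕ Fin n → ℂ) →ₗ⋆[ℂ] ℂ :=
  LinearMap.mk₂'ₛₗ (RingHom.id ℂ) (starRingEnd ℂ) (krein n)
    (fun _ _ _ => by simp only [krein_eq, add_dotProduct, mul_add])
    (fun _ _ _ => by simp only [krein_eq, smul_dotProduct, smul_eq_mul, RingHom.id_apply]; ring)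
    (fun _ _ _ => by simp only [krein_eq, mulVec_add, star_add, dotProduct_add, mul_add])
    (fun _ _ _ => by
      simp only [krein_eq, mulVec_smul, star_smul, dotProduct_smul, smul_eq_mul, star_def]; ring)

lemma kreinForm_apply (n : ℕ) (x y : Fin n ⊕ Fin n → ℂ) : kreinForm n x y = krein n x y := rfl

/-- Vanishing of the Krein products of Jordan-chain vectors when `j + j' ≤ max(j_i, j_{i'})`. -/
theorem krein_jordan_chain_vanishing (n m : ℕ)
    (γ : Matrix (Fin n ⊕ Fin n) (Fin n ⊕ Fin n) ℝ)
    (hγ : γᵀ * JmatR n * γ = JmatR n)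
    (lam : ℂ) (hU : ‖lam‖ = 1)
    (jsz : Fin m → ℕ) (ξ : Fin m → ℕ → (Fin n ⊕ Fin n) → ℂ)
    (hzero : ∀ i, ξ i 0 = 0)
    (hchain : ∀ i : Fin m, ∀ j : ℕ, 1 ≤ j → j ≤ jsz i →
      (γ.map Complex.ofReal).mulVec (ξ i j) = lam • ξ i j - ξ i (j - 1))
    (i i' : Fin m) (j j' : ℕ) (hj : j ≤ jsz i) (hj' : j' ≤ jsz i')
    (hsum : j + j' ≤ max (jsz i) (jsz i')) :
    krein n (ξ i j) (ξ i' j') = 0 := by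
  have hinv : ∀ x y, kreinForm n (γ.map ofReal *ᵥ x) (γ.map ofReal *ᵥ y) = kreinForm n x y :=
    krein_map_ofReal_mulVec hγ
  have hlam : lam ∈ unitary ℂ := by
    rw [Unitary.mem_iff_star_mul_self, star_def, conj_mul', hU, ofReal_one, one_pow]
  have hξ (k : Fin m) : IsJordanChain (γ.map ofReal *ᵥ ·) lam (ξ k) (jsz k) :=
    ⟨hzero k, fun l hl => by simpa using hchain k (l + 1) (by omega) hl⟩
  rcases le_total (jsz i') (jsz i) with h | h
  · exact (hξ i).form_eq_zero_of_add_le hinv hlam (hξ i') hj' (by omega)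
  · rw [← conj_krein, ← kreinForm_apply,
      (hξ i').form_eq_zero_of_add_le hinv hlam (hξ i) hj (by omega), map_zero]
end

section
/- Let γ be a 2n×2n real symplectic matrix with eigenvalue λ = e^{iθ₀} on the unit circle, Jordan chains ξ_{i,j} forming a basis of the generalized eigenspace E_λ, and set η_{i,j} = (-i e^{iθ₀})^j ξ_{i,j}. Then for all i, i' with j_i = j_{i'} (same Jordan block size), the quantity (η_{i, j_i}, η_{i', 1})_G equals the complex conjugate of (η_{i', j_{i'}}, η_{i, 1})_G; i.e., the matrix X restricted to blocks of equal size is Hermitian. -/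
open Matrix Complex

/-!
A real symplectic `γ` preserves the Krein form, so the chain relations
`γ ξ_{j+1} = λ ξ_{j+1} - ξ_j` with `|λ| = 1` give
`G(j,k) = λ G(j+1,k) + λ̄ G(j,k+1)` for `G(j,k) = (ξ_{i,j}, ξ_{i',k})_G`. The rescaling
`η_j = (-iλ)^j ξ_j` turns this into `F(j+1,k) - F(j,k+1) = -i F(j,k)` for
`F(j,k) = (η_{i,j}, η_{i',k})_G`. As `F` vanishes on both axes, `F` vanishes on `j + k ≤ s`,
hence is constant on the antidiagonal `j + k = s + 1`; so `F(s,1) = F(1,s)`, which is the claim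
by conjugate symmetry of the Krein form.
-/

section KreinForm

variable {n : ℕ}

theorem conj_Jmat_apply (j k : Fin n ⊕ Fin n) : starRingEnd ℂ (Jmat n j k) = Jmat n j k := by
  cases j <;> cases k <;> simp [Jmat, Matrix.one_apply]

theorem JmatR_map_ofReal : (JmatR n).map ((↑) : ℝ → ℂ) = Jmat n := by
  ext j k
  cases j <;> cases k <;> simp [JmatR, Jmat, Matrix.one_apply, apply_ite]

theorem krein_conj_symm (x y : Fin n ⊕ Fin n → ℂ) :
    krein n x y = starRingEnd ℂ (krein n y x) := by
  have Jmat_antisymm (j k : Fin n ⊕ Fin n) : Jmat n k j = -Jmat n j k := by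
    cases j <;> cases k <;> simp [Jmat, Matrix.one_apply, eq_comm]
  simp only [krein, Matrix.mulVec, dotProduct, map_sum, Finset.mul_sum]
  rw [Finset.sum_comm]
  refine Finset.sum_congr rfl fun a _ => Finset.sum_congr rfl fun b _ => ?_
  simp only [Jmat_antisymm a b, map_neg, map_mul, conj_I, conj_Jmat_apply, conj_conj]
  ring

theorem krein_eq_dotProduct (x y : Fin n ⊕ Fin n → ℂ) :
    krein n x y = I * (x ⬝ᵥ (Jmat n *ᵥ star y)) := by
  simp [krein, dotProduct, Matrix.mulVec, map_sum, conj_Jmat_apply]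

theorem krein_smul_left (a : ℂ) (x y : Fin n ⊕ Fin n → ℂ) :
    krein n (a • x) y = a * krein n x y := by
  simp only [krein, Pi.smul_apply, smul_eq_mul, Finset.mul_sum]
  exact Finset.sum_congr rfl fun j _ => by ring

theorem krein_smul_right (b : ℂ) (x y : Fin n ⊕ Fin n → ℂ) :
    krein n x (b • y) = starRingEnd ℂ b * krein n x y := by
  simp only [krein, Matrix.mulVec_smul, Pi.smul_apply, smul_eq_mul, map_mul, Finset.mul_sum]
  exact Finset.sum_congr rfl fun j _ => by ring

theorem krein_zero_left (y : Fin n ⊕ Fin n → ℂ) : krein n 0 y = 0 := by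
  simp [krein]

theorem krein_zero_right (x : Fin n ⊕ Fin n → ℂ) : krein n x 0 = 0 := by
  simp [krein]

theorem krein_sub_sub (x x' y y' : Fin n ⊕ Fin n → ℂ) :
    krein n (x - x') (y - y') = krein n x y - krein n x y' - krein n x' y + krein n x' y' := by
  simp only [krein, Matrix.mulVec_sub, Pi.sub_apply, map_sub, Finset.mul_sum,
    ← Finset.sum_sub_distrib, ← Finset.sum_add_distrib]
  exact Finset.sum_congr rfl fun j _ => by ring

theorem krein_mulVec_of_symplectic {γ : Matrix (Fin n ⊕ Fin n) (Fin n ⊕ Fin n) ℝ}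
    (hγ : γᵀ * JmatR n * γ = JmatR n) (x y : Fin n ⊕ Fin n → ℂ) :
    krein n (γ.map (↑) *ᵥ x) (γ.map (↑) *ᵥ y) = krein n x y := by
  have hA : (γ.map ((↑) : ℝ → ℂ))ᵀ * Jmat n * γ.map (↑) = Jmat n := by
    rw [← JmatR_map_ofReal, ← Matrix.transpose_map, show ((↑) : ℝ → ℂ) = ofRealHom from rfl,
      ← Matrix.map_mul, ← Matrix.map_mul, hγ]
  have hstar : star (γ.map ((↑) : ℝ → ℂ) *ᵥ y) = γ.map (↑) *ᵥ star y := by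
    ext j
    simp [Matrix.mulVec, dotProduct]
  rw [krein_eq_dotProduct, krein_eq_dotProduct, hstar, Matrix.mulVec_mulVec,
    ← Matrix.vecMul_transpose, Matrix.dotProduct_mulVec, Matrix.vecMul_vecMul,
    ← Matrix.mul_assoc, hA, ← Matrix.dotProduct_mulVec]

theorem krein_recurrence_of_chain {γ : Matrix (Fin n ⊕ Fin n) (Fin n ⊕ Fin n) ℝ}
    (hγ : γᵀ * JmatR n * γ = JmatR n) {μ : ℂ} (hμ : ‖μ‖ = 1) {x₀ x₁ y₀ y₁ : Fin n ⊕ Fin n → ℂ}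
    (hx : γ.map (↑) *ᵥ x₁ = μ • x₁ - x₀) (hy : γ.map (↑) *ᵥ y₁ = μ • y₁ - y₀) :
    krein n x₀ y₀ = μ * krein n x₁ y₀ + starRingEnd ℂ μ * krein n x₀ y₁ := by
  have hμ' : μ * starRingEnd ℂ μ = 1 := by rw [mul_conj', hμ]; norm_num
  have h := krein_mulVec_of_symplectic hγ x₁ y₁
  rw [hx, hy, krein_sub_sub, krein_smul_left, krein_smul_left, krein_smul_right,
    krein_smul_right, ← mul_assoc, hμ', one_mul] at h
  linear_combination h

theorem krein_pow_smul_recurrence_of_chain {γ : Matrix (Fin n ⊕ Fin n) (Fin n ⊕ Fin n) ℝ}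
    (hγ : γᵀ * JmatR n * γ = JmatR n) {μ : ℂ} (hμ : ‖μ‖ = 1) {x₀ x₁ y₀ y₁ : Fin n ⊕ Fin n → ℂ}
    (hx : γ.map (↑) *ᵥ x₁ = μ • x₁ - x₀) (hy : γ.map (↑) *ᵥ y₁ = μ • y₁ - y₀) (j k : ℕ) :
    krein n ((-I * μ) ^ (j + 1) • x₁) ((-I * μ) ^ k • y₀)
        - krein n ((-I * μ) ^ j • x₀) ((-I * μ) ^ (k + 1) • y₁)
      = -I * krein n ((-I * μ) ^ j • x₀) ((-I * μ) ^ k • y₀) := by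
  simp only [krein_smul_left, krein_smul_right, krein_recurrence_of_chain hγ hμ hx hy, map_pow,
    map_mul, map_neg, conj_I]
  ring

end KreinForm

section AntidiagonalRecurrence

variable {R : Type*} [Ring R] {c : R} {s : ℕ} {f : ℕ → ℕ → R}

theorem eq_zero_of_add_le_of_recurrence (hj0 : ∀ j, f j 0 = 0)
    (hrec : ∀ j k, j < s → k < s → f (j + 1) k - f j (k + 1) = c * f j k) :
    ∀ k j, j + k ≤ s → f j k = 0
  | 0, j, _ => hj0 j
  | k + 1, j, hjk => by
    have h := hrec j k (by omega) (by omega)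
    rw [eq_zero_of_add_le_of_recurrence hj0 hrec k j (by omega),
      eq_zero_of_add_le_of_recurrence hj0 hrec k (j + 1) (by omega), mul_zero] at h
    simpa using h

theorem apply_antidiagonal_eq_of_recurrence (hj0 : ∀ j, f j 0 = 0)
    (hrec : ∀ j k, j < s → k < s → f (j + 1) k - f j (k + 1) = c * f j k) :
    ∀ k j, j + k + 1 = s → f (j + 1) (k + 1) = f s 1
  | 0, j, hjk => by rw [← hjk]
  | k + 1, j, hjk => by
    have h := hrec (j + 1) (k + 1) (by omega) (by omega)
    rw [eq_zero_of_add_le_of_recurrence hj0 hrec (k + 1) (j + 1) (by omega), mul_zero,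
      sub_eq_zero] at h
    rw [← h, apply_antidiagonal_eq_of_recurrence hj0 hrec k (j + 1) (by omega)]

theorem apply_last_one_eq_of_recurrence (hj0 : ∀ j, f j 0 = 0) (h0k : ∀ k, f 0 k = 0)
    (hrec : ∀ j k, j < s → k < s → f (j + 1) k - f j (k + 1) = c * f j k) :
    f s 1 = f 1 s := by
  cases s with
  | zero => rw [hj0, h0k]
  | succ s => exact (apply_antidiagonal_eq_of_recurrence hj0 hrec s 0 (by omega)).symm

end AntidiagonalRecurrence

theorem krein_X_hermitian_on_equal_blocks_general (n m : ℕ)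
    (γ : Matrix (Fin n ⊕ Fin n) (Fin n ⊕ Fin n) ℝ)
    (hγ : γᵀ * JmatR n * γ = JmatR n)
    (θ0 : ℝ)
    (jsz : Fin m → ℕ)
    (ξ η : Fin m → ℕ → (Fin n ⊕ Fin n) → ℂ)
    (hzero : ∀ i, ξ i 0 = 0)
    (hchain : ∀ i : Fin m, ∀ j : ℕ, 1 ≤ j → j ≤ jsz i →
      (γ.map Complex.ofReal).mulVec (ξ i j) = Complex.exp (Complex.I * θ0) • ξ i j - ξ i (j - 1))
    (hη : ∀ i j, η i j = ((-Complex.I) * Complex.exp (Complex.I * θ0)) ^ j • ξ i j)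
    (i i' : Fin m) (heq : jsz i = jsz i') :
    krein n (η i (jsz i)) (η i' 1)
      = (starRingEnd ℂ) (krein n (η i' (jsz i')) (η i 1)) := by
  have hξ : ∀ a, ∀ j < jsz a,
      γ.map (↑) *ᵥ ξ a (j + 1) = exp (I * θ0) • ξ a (j + 1) - ξ a j := fun a j hj => by
    simpa using hchain a (j + 1) (by omega) hj
  have hη0 : ∀ a, η a 0 = 0 := fun a => by rw [hη, hzero, smul_zero]
  rw [← krein_conj_symm, ← heq]
  refine apply_last_one_eq_of_recurrence (f := fun j k => krein n (η i j) (η i' k)) (c := -I)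
    (fun j => by simp only [hη0, krein_zero_right]) (fun k => by simp only [hη0, krein_zero_left])
    (fun j k hj hk => ?_)
  simp only [hη]
  exact krein_pow_smul_recurrence_of_chain hγ (norm_exp_I_mul_ofReal θ0) (hξ i j hj)
    (hξ i' k (heq ▸ hk)) j k

/-- For Jordan blocks of equal size, `X_{i,i'} = (η_{i,j_i}, η_{i',1})_G` is Hermitian:
`(η_{i,j_i}, η_{i',1})_G = conj (η_{i',j_{i'}}, η_{i,1})_G`. -/
theorem krein_X_hermitian_on_equal_blocks (n m : ℕ)
    (γ : Matrix (Fin n ⊕ Fin n) (Fin n ⊕ Fin n) ℝ)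
    (hγ : γᵀ * JmatR n * γ = JmatR n)
    (θ0 : ℝ)
    (jsz : Fin m → ℕ) (hjsz : ∀ i, 1 ≤ jsz i)
    (ξ η : Fin m → ℕ → (Fin n ⊕ Fin n) → ℂ)
    (hzero : ∀ i, ξ i 0 = 0)
    (hchain : ∀ i : Fin m, ∀ j : ℕ, 1 ≤ j → j ≤ jsz i →
      (γ.map Complex.ofReal).mulVec (ξ i j) = Complex.exp (Complex.I * θ0) • ξ i j - ξ i (j - 1))
    (hli : LinearIndependent ℂ (fun p : Σ i : Fin m, Fin (jsz i) => ξ p.1 ((p.2 : ℕ) + 1)))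
    (hspan : ∀ v : (Fin n ⊕ Fin n) → ℂ,
      ((Complex.exp (Complex.I * θ0) • (1 : Matrix (Fin n ⊕ Fin n) (Fin n ⊕ Fin n) ℂ)
          - γ.map Complex.ofReal) ^ (2 * n)).mulVec v = 0 →
      v ∈ Submodule.span ℂ
        (Set.range fun p : Σ i : Fin m, Fin (jsz i) => ξ p.1 ((p.2 : ℕ) + 1)))
    (hη : ∀ i j, η i j = ((-Complex.I) * Complex.exp (Complex.I * θ0)) ^ j • ξ i j)
    (i i' : Fin m) (heq : jsz i = jsz i') :
    krein n (η i (jsz i)) (η i' 1)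
      = (starRingEnd ℂ) (krein n (η i' (jsz i')) (η i 1)) :=
  krein_X_hermitian_on_equal_blocks_general n m γ hγ θ0 jsz ξ η hzero hchain hη i i' heq
end
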